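/- If $b < a^2/3$ and $c_0 \le c \le c_1$, then the largest real root $x_1$ of $x^3 + ax^2 + bx + c$ satisfies $\mu_1 \le x_1 \le \nu_1$, where $\mu_1 = -a/3 + \frac{1}{3}\sqrt{a^2-3b}$ and $\nu_1 = -a/3 + \sqrt{a^2/3 - b}$. -/

import Mathlib

/-!
Shift to the depressed cubic: with `y = x + a/3` and `t = √(a²/3 - b)` the polynomial is
`y (y - t) (y + t) + (c - c₀)`. Since `c ≥ c₀` it is positive for `y > t`, which gives `x₁ ≤ ν₁`,
and nonnegative at `y = t`. At `y = t/√3`, the local minimum, it equals `c - c₁ ≤ 0`, so the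
intermediate value theorem yields a root in `[μ₁, ν₁]`, whence `μ₁ ≤ x₁`.
-/

open Real Set

lemma cubic_eq_depressed (a b c t x : ℝ) (ht : t ^ 2 = a ^ 2 / 3 - b) :
    x^3 + a*x^2 + b*x + c =
      (x + a/3) * (x + a/3 - t) * (x + a/3 + t) + (c - (-(2/27)*a^3 + (1/3)*a*b)) := by
  linear_combination (x + a/3) * ht

lemma cubic_eval_neg_div_three_add_div_three (a b c s : ℝ) (hs : s ^ 2 = a ^ 2 - 3 * b) :
    let x := -a/3 + (1/3)*s
    x^3 + a*x^2 + b*x + c = c - (-(2/27)*a^3 + (1/3)*a*b + (2/27)*s^3) := by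
  intro x
  linear_combination (s/9) * hs

lemma cubic_gt_of_lt (a b c t x : ℝ) (ht0 : 0 ≤ t) (ht : t ^ 2 = a ^ 2 / 3 - b)
    (hx : -a/3 + t < x) :
    c - (-(2/27)*a^3 + (1/3)*a*b) < x^3 + a*x^2 + b*x + c := by
  rw [cubic_eq_depressed a b c t x ht]
  have : 0 < (x + a/3) * (x + a/3 - t) * (x + a/3 + t) := by
    apply mul_pos (mul_pos _ _) <;> linarith
  linarith

lemma sqrt_pow_three {d : ℝ} (hd : 0 ≤ d) : √(d ^ 3) = √d ^ 3 := by
  rw [show d ^ 3 = (√d ^ 3) ^ 2 by rw [← pow_mul, mul_comm, pow_mul, sq_sqrt hd]]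
  exact sqrt_sq (by positivity)

theorem stmt_19 (a b c : ℝ) (hb : b < a^2/3)
    (hc0 : -(2/27)*a^3 + (1/3)*a*b ≤ c)
    (hc1 : c ≤ -(2/27)*a^3 + (1/3)*a*b + (2/27)*Real.sqrt ((a^2-3*b)^3)) :
    ∀ x₁ : ℝ, (x₁^3 + a*x₁^2 + b*x₁ + c = 0 ∧
        ∀ x : ℝ, x^3 + a*x^2 + b*x + c = 0 → x ≤ x₁) →
      -a/3 + (1/3)*Real.sqrt (a^2-3*b) ≤ x₁ ∧
      x₁ ≤ -a/3 + Real.sqrt (a^2/3 - b) := by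
  rintro x₁ ⟨hroot, hmax⟩
  set f : ℝ → ℝ := fun x ↦ x^3 + a*x^2 + b*x + c
  set s := √(a^2 - 3*b)
  set t := √(a^2/3 - b)
  have hs : s ^ 2 = a ^ 2 - 3 * b := sq_sqrt (by linarith)
  have ht : t ^ 2 = a ^ 2 / 3 - b := sq_sqrt (by linarith)
  have hst : (1/3) * s ≤ t := by nlinarith [sqrt_nonneg (a^2 - 3*b), sqrt_nonneg (a^2/3 - b)]
  rw [sqrt_pow_three (by linarith)] at hc1
  have hf_lower : f (-a/3 + (1/3)*s) ≤ 0 := by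
    simp only [f, cubic_eval_neg_div_three_add_div_three a b c s hs]; linarith
  have hf_upper : 0 ≤ f (-a/3 + t) := by
    simp only [f, cubic_eq_depressed a b c t _ ht]; ring_nf; linarith
  obtain ⟨x, hx, hfx⟩ := intermediate_value_Icc (by linarith) (by fun_prop : Continuous f).continuousOn
    ⟨hf_lower, hf_upper⟩
  refine ⟨hx.1.trans (hmax x hfx), not_lt.mp fun h ↦ ?_⟩
  linarith [cubic_gt_of_lt a b c t x₁ (sqrt_nonneg _) ht h]
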